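/- arXiv:1812.07237 — 2 statements merged into one kernel-verified Lean document; each statement's English description precedes it below -/
import Mathlib

section
/- For $\gamma = 1$, the function $g(y) = \frac{y}{y+1}(2y)^2$ on $[0,1]$ has inverse $g^{-1}(t) = \frac{t^{1/3}}{2}\left(\left[1+\sqrt{1-t/27}\right]^{1/3} + \left[1-\sqrt{1-t/27}\right]^{1/3}\right)$ for $0 \le t \le 2$; that is, $g(g^{-1}(t)) = t$ for all $t \in [0,2]$. -/
noncomputable def g (y : ℝ) : ℝ := 4 * y ^ 3 / (y + 1)

noncomputable def gInv (t : ℝ) : ℝ :=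
  t ^ ((1 : ℝ) / 3) / 2 *
    ((1 + Real.sqrt (1 - t / 27)) ^ ((1 : ℝ) / 3) +
     (1 - Real.sqrt (1 - t / 27)) ^ ((1 : ℝ) / 3))

theorem g_gInv (t : ℝ) (ht : t ∈ Set.Icc (0 : ℝ) 2) : g (gInv t) = t := by
  obtain ⟨ht0, ht2⟩ := ht
  set s := Real.sqrt (1 - t / 27) with hs
  have hrad : (0:ℝ) ≤ 1 - t / 27 := by linarith
  have hs0 : 0 ≤ s := Real.sqrt_nonneg _
  have hs2 : s ^ 2 = 1 - t / 27 := Real.sq_sqrt hrad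
  have hs1 : s ≤ 1 := by
    nlinarith [hs2, hs0]
  set a := (1 + s) ^ ((1:ℝ)/3) with ha
  set b := (1 - s) ^ ((1:ℝ)/3) with hb
  have h1s : (0:ℝ) ≤ 1 + s := by linarith
  have h1s' : (0:ℝ) ≤ 1 - s := by linarith
  have ha0 : 0 ≤ a := Real.rpow_nonneg h1s _
  have hb0 : 0 ≤ b := Real.rpow_nonneg h1s' _
  have cube : ∀ x : ℝ, 0 ≤ x → (x ^ ((1:ℝ)/3)) ^ 3 = x := by
    intro x hx
    rw [← Real.rpow_natCast (x ^ ((1:ℝ)/3)) 3, ← Real.rpow_mul hx]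
    norm_num
  have ha3 : a ^ 3 = 1 + s := cube _ h1s
  have hb3 : b ^ 3 = 1 - s := cube _ h1s'
  set u := t ^ ((1:ℝ)/3) with hu
  have hu0 : 0 ≤ u := Real.rpow_nonneg ht0 _
  have hu3 : u ^ 3 = t := cube _ ht0
  have hab : a * b = u / 3 := by
    rw [ha, hb, ← Real.mul_rpow h1s h1s']
    have : (1 + s) * (1 - s) = t / 27 := by nlinarith [hs2]
    rw [this, show t / 27 = t / 27 by rfl, Real.div_rpow ht0 (by norm_num : (0:ℝ) ≤ 27)]
    have h27 : (27:ℝ) ^ ((1:ℝ)/3) = 3 := by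
      rw [show (27:ℝ) = 3 ^ (3:ℕ) by norm_num, ← Real.rpow_natCast 3 3,
        ← Real.rpow_mul (by norm_num : (0:ℝ) ≤ 3)]
      norm_num
    rw [h27, hu]
  have hy : gInv t = u / 2 * (a + b) := rfl
  have hy0 : 0 ≤ gInv t := by
    rw [hy]; positivity
  have hkey : 4 * (gInv t) ^ 3 = t * (gInv t + 1) := by
    rw [hy]
    have expand : (u / 2 * (a + b)) ^ 3
        = u ^ 3 / 8 * (a ^ 3 + b ^ 3 + 3 * (a * b) * (a + b)) := by ring
    rw [expand, ha3, hb3, hab, hu3]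
    ring
  rw [g, hkey]
  field_simp
end

section
/- For $a \in \mathbb{R}$ and $u \in \mathbb{C}\setminus\{0\}$ with $a \ne 0$ or $|u| \ne 1$, one has $\frac{1}{2\pi}\int_0^{2\pi} \frac{e^{i\theta}\, d\theta}{a^2 + |1+u e^{i\theta}|^2} = \frac{1}{2u}\left(1 - \frac{a^2+|u|^2+1}{\sqrt{(a^2+|u|^2+1)^2 - 4|u|^2}}\right)$. -/
open Complex Real Metric

set_option maxHeartbeats 2000000 in

theorem integral_J (a : ℝ) (u : ℂ) (hu : u ≠ 0) (h : a ≠ 0 ∨ ‖u‖ ≠ 1) :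
    (((2 * Real.pi : ℝ))⁻¹ : ℂ) *
      ∫ θ in (0 : ℝ)..(2 * Real.pi),
        Complex.exp (θ * Complex.I) /
          ((a ^ 2 + ‖1 + u * Complex.exp (θ * Complex.I)‖ ^ 2 : ℝ) : ℂ) =
    1 / (2 * u) *
      (1 - ((a ^ 2 + ‖u‖ ^ 2 + 1 : ℝ) : ℂ) /
        ((Real.sqrt ((a ^ 2 + ‖u‖ ^ 2 + 1) ^ 2 - 4 * ‖u‖ ^ 2) : ℝ) : ℂ)) := by
  have hr0 : (0:ℝ) < ‖u‖ := norm_pos_iff.mpr hu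
  set r : ℝ := ‖u‖ with hr_def
  set b : ℝ := a ^ 2 + r ^ 2 + 1 with hb_def
  have hbr : 2 * r < b := by
    have h2 : 0 < a ^ 2 + (r - 1) ^ 2 := by
      rcases h with ha | hr1
      · have : 0 < a ^ 2 := by positivity
        nlinarith [sq_nonneg (r - 1)]
      · have hne : r - 1 ≠ 0 := sub_ne_zero.mpr hr1
        have : 0 < (r - 1) ^ 2 := by positivity
        nlinarith [sq_nonneg a]
    nlinarith
  set D : ℝ := b ^ 2 - 4 * r ^ 2 with hD_def
  have hD : 0 < D := by nlinarith
  set s : ℝ := Real.sqrt D with hs_def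
  have hs : 0 < s := Real.sqrt_pos.mpr hD
  have hs2 : s ^ 2 = D := Real.sq_sqrt hD.le
  have hsb : s < b := by nlinarith
  have h2u : (2 : ℂ) * u ≠ 0 := mul_ne_zero two_ne_zero hu
  set z₀ : ℂ := ((-b + s : ℝ) : ℂ) / (2 * u) with hz0
  set z₁ : ℂ := ((-b - s : ℝ) : ℂ) / (2 * u) with hz1
  have habs2u : ‖2 * u‖ = 2 * r := by simp [map_mul, hr_def]
  have habs0 : ‖z₀‖ = (b - s) / (2 * r) := by
    rw [hz0, norm_div, habs2u, Complex.norm_real, Real.norm_eq_abs, abs_of_nonpos (by linarith)]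
    ring
  have habs1 : ‖z₁‖ = (b + s) / (2 * r) := by
    rw [hz1, norm_div, habs2u, Complex.norm_real, Real.norm_eq_abs, abs_of_nonpos (by linarith)]
    ring
  have hbs : b - s < 2 * r := by
    nlinarith [Real.sq_sqrt hD.le, Real.sqrt_nonneg D]
  have hz0mem : z₀ ∈ ball (0:ℂ) 1 := by
    rw [mem_ball_zero_iff, habs0, div_lt_one (by linarith)]
    linarith
  have hz1out : ∀ z : ℂ, ‖z‖ ≤ 1 → z ≠ z₁ := by
    intro z hz hzz
    rw [hzz, habs1] at hz
    rw [div_le_one (by linarith)] at hz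
    linarith
  -- u * conj u = r ^ 2
  have huu : u * (starRingEnd ℂ) u = ((r : ℝ) : ℂ) ^ 2 := by
    rw [Complex.mul_conj, Complex.normSq_eq_norm_sq]
    push_cast [hr_def]
    ring
  -- the key polynomial identity
  have key : ∀ z : ℂ, u * (z - z₀) * (z - z₁) = u * z ^ 2 + (b : ℂ) * z + (starRingEnd ℂ) u := by
    intro z
    have hsD : ((s : ℂ)) ^ 2 = (b : ℂ) ^ 2 - 4 * ((r : ℝ) : ℂ) ^ 2 := by
      exact_mod_cast congrArg (Complex.ofReal) (hs2.trans hD_def)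
    rw [hz0, hz1]
    push_cast
    field_simp
    linear_combination (-1) * hsD - 4 * huu
  -- denominator identity on the circle
  have hden : ∀ θ : ℝ,
      ((a ^ 2 + ‖1 + u * Complex.exp (θ * Complex.I)‖ ^ 2 : ℝ) : ℂ)
          * Complex.exp (θ * Complex.I)
        = u * (Complex.exp (θ * Complex.I) - z₀) * (Complex.exp (θ * Complex.I) - z₁) := by
    intro θ
    set z : ℂ := Complex.exp (θ * Complex.I) with hzdef
    have hzc : z * (starRingEnd ℂ) z = 1 := by
      rw [Complex.mul_conj, Complex.normSq_eq_norm_sq]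
      rw [hzdef, Complex.norm_exp_ofReal_mul_I]
      norm_num
    have habsw : ((‖1 + u * z‖ : ℝ) : ℂ) ^ 2
        = (1 + u * z) * (starRingEnd ℂ) (1 + u * z) := by
      rw [Complex.mul_conj, Complex.normSq_eq_norm_sq]
      push_cast
      ring
    have hbC : ((b : ℝ) : ℂ) = (a : ℂ) ^ 2 + ((r : ℝ) : ℂ) ^ 2 + 1 := by
      exact_mod_cast congrArg Complex.ofReal hb_def
    rw [key]
    push_cast
    rw [habsw]
    simp only [map_add, map_mul, map_one]
    linear_combination ((starRingEnd ℂ) u + u * (starRingEnd ℂ) u * z) * hzc + z * huu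
      - z * hbC
  -- the denominator never vanishes
  have hE : ∀ θ : ℝ,
      (a ^ 2 + ‖1 + u * Complex.exp (θ * Complex.I)‖ ^ 2 : ℝ) ≠ 0 := by
    intro θ hc
    set z : ℂ := Complex.exp (θ * Complex.I) with hzdef
    have hza : ‖z‖ = 1 := by rw [hzdef]; exact Complex.norm_exp_ofReal_mul_I θ
    have h1 : ‖1 + u * z‖ ^ 2 = 0 := by nlinarith [sq_nonneg a]
    have h2 : a ^ 2 = 0 := by nlinarith [sq_nonneg (‖1 + u * z‖)]
    have h3 : (1 : ℂ) + u * z = 0 := by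
      have h1' : ‖1 + u * z‖ = 0 := pow_eq_zero_iff two_ne_zero |>.mp h1
      exact norm_eq_zero.mp h1'
    have h4 : u * z = -1 := by linear_combination h3
    have h5 : r = 1 := by
      have h6 : ‖u * z‖ = 1 := by rw [h4]; simp
      rw [norm_mul, hza, mul_one] at h6
      exact h6
    have h6 : a = 0 := pow_eq_zero_iff two_ne_zero |>.mp h2
    rcases h with ha | hr1
    · exact ha h6
    · exact hr1 h5
  -- the holomorphic function
  set f : ℂ → ℂ := fun z => z / (u * (z - z₁) * Complex.I) with hf_def
  have hfd : DifferentiableOn ℂ f (closedBall (0 : ℂ) 1) := by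
    intro z hz
    apply DifferentiableAt.differentiableWithinAt
    apply DifferentiableAt.div differentiableAt_id
    · fun_prop
    · have hzz : z ≠ z₁ := hz1out z (by
        simpa using mem_closedBall_zero_iff.mp hz)
      exact mul_ne_zero (mul_ne_zero hu (sub_ne_zero.mpr hzz)) Complex.I_ne_zero
  have hC := hfd.circleIntegral_sub_inv_smul hz0mem
  rw [circleIntegral] at hC
  simp only [deriv_circleMap, circleMap, Complex.ofReal_one, one_mul, zero_add,
    smul_eq_mul] at hC
  -- identify the integrands
  have hint : ∀ θ : ℝ,
      Complex.exp (θ * Complex.I) * Complex.I *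
          ((Complex.exp (θ * Complex.I) - z₀)⁻¹ * f (Complex.exp (θ * Complex.I)))
        = Complex.exp (θ * Complex.I) /
            ((a ^ 2 + ‖1 + u * Complex.exp (θ * Complex.I)‖ ^ 2 : ℝ) : ℂ) := by
    intro θ
    have hd := hden θ
    set z : ℂ := Complex.exp (θ * Complex.I) with hzdef
    have hza : ‖z‖ = 1 := by rw [hzdef]; exact Complex.norm_exp_ofReal_mul_I θ
    have hzne : z ≠ 0 := by rw [hzdef]; exact Complex.exp_ne_zero _
    have hz0ne : z - z₀ ≠ 0 := sub_ne_zero.mpr (by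
      intro e
      rw [e, habs0] at hza
      rw [div_eq_one_iff_eq (by positivity : (2*r : ℝ) ≠ 0)] at hza
      linarith)
    have hz1ne : z - z₁ ≠ 0 := sub_ne_zero.mpr (hz1out z hza.le)
    have hE' : ((a ^ 2 + ‖1 + u * z‖ ^ 2 : ℝ) : ℂ) ≠ 0 :=
      Complex.ofReal_ne_zero.mpr (hE θ)
    rw [hf_def]
    have e1 : z * Complex.I * ((z - z₀)⁻¹ * (z / (u * (z - z₁) * Complex.I)))
        = z * z / (u * (z - z₀) * (z - z₁)) := by
      field_simp
    rw [e1, ← hd]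
    rw [div_eq_div_iff (by exact mul_ne_zero hE' hzne) hE']
    ring
  have hIeq : (∫ θ in (0:ℝ)..(2*Real.pi), Complex.exp (θ * Complex.I) /
      ((a ^ 2 + ‖1 + u * Complex.exp (θ * Complex.I)‖ ^ 2 : ℝ) : ℂ))
      = (2 * Real.pi * Complex.I : ℂ) * f z₀ := by
    rw [← hC]
    apply intervalIntegral.integral_congr
    intro θ _
    exact (hint θ).symm
  have hvz : u * (z₀ - z₁) = ((s : ℝ) : ℂ) := by
    rw [hz0, hz1]
    push_cast
    field_simp
    ring
  have hfz0 : f z₀ = z₀ / (((s : ℝ) : ℂ) * Complex.I) := by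
    rw [hf_def, ← hvz]
  have hsne : ((s : ℝ) : ℂ) ≠ 0 := Complex.ofReal_ne_zero.mpr hs.ne'
  have hπ : ((Real.pi : ℝ) : ℂ) ≠ 0 := Complex.ofReal_ne_zero.mpr Real.pi_ne_zero
  rw [hIeq]
  have hstep : (((2 * Real.pi : ℝ))⁻¹ : ℂ) * ((2 * Real.pi * Complex.I : ℂ) * f z₀)
      = z₀ / ((s : ℝ) : ℂ) := by
    rw [hfz0]
    push_cast
    field_simp
  rw [hstep, hz0]
  push_cast
  field_simp
  ring
end
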